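/- arXiv:2301.03675 — 6 statements merged into one kernel-verified Lean document; each statement's English description precedes it below -/
import Mathlib

section
/- Let u be a unit vector such that {u, Su, S²u, S³u} is linearly independent, and let φ = arccos(g(u,Su)) be the angle between u and Su. Then π/4 < φ < 3π/4, equivalently |g(u,Su)| < √2/2. -/
theorem angle_bounds {V : Type*} [AddCommGroup V] [Module ℝ V]
    (g : V →ₗ[ℝ] V →ₗ[ℝ] ℝ) (S : V →ₗ[ℝ] V)
    (hsym : ∀ u v : V, g u v = g v u)
    (hpos : ∀ v : V, v ≠ 0 → 0 < g v v)
    (hS4 : ∀ v : V, S (S (S (S v))) = -v)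
    (hcomp : ∀ u v : V, g (S u) (S v) = g u v)
    (u : V) (hu : g u u = 1)
    (hind : LinearIndependent ℝ ![u, S u, S (S u), S (S (S u))])
    (φ : ℝ) (hφ : φ = Real.arccos (g u (S u))) :
    (Real.pi / 4 < φ ∧ φ < 3 * Real.pi / 4) ∧ |g u (S u)| < Real.sqrt 2 / 2 := by
  set c := g u (S u) with hc
  have sqrt2 : Real.sqrt 2 * Real.sqrt 2 = 2 := Real.mul_self_sqrt (by norm_num)
  have sqrt2pos : (0:ℝ) < Real.sqrt 2 := Real.sqrt_pos.2 (by norm_num)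
  -- basic inner products
  have h11 : g (S u) (S u) = 1 := by rw [hcomp]; exact hu
  have h22 : g (S (S u)) (S (S u)) = 1 := by rw [hcomp, hcomp]; exact hu
  have h02 : g u (S (S u)) = 0 := by
    have h1 : g (S (S u)) (S (S (S (S u)))) = g u (S (S u)) := by
      rw [hcomp, hcomp]
    rw [hS4, map_neg, hsym u (S (S u))] at h1
    rw [hsym]
    linarith
  have h12 : g (S u) (S (S u)) = c := by rw [hcomp]
  -- key lemma: for any real t, w = u + t • S u + S² u is nonzero, so g w w > 0
  have key : ∀ t : ℝ, 0 < 2 + t * t + 4 * t * c := by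
    intro t
    set w : V := u + t • S u + S (S u) with hw
    have hwne : w ≠ 0 := by
      intro h0
      have := linearIndependent_iff'.mp hind Finset.univ ![1, t, 1, 0] ?_ 0 (Finset.mem_univ _)
      · simp at this
      · have : ∑ i : Fin 4, (![1, t, 1, 0] : Fin 4 → ℝ) i • ![u, S u, S (S u), S (S (S u))] i = w := by
          simp [Fin.sum_univ_four, hw]
        rw [this, h0]
    have hpw := hpos w hwne
    have expand : g w w = 2 + t * t + 4 * t * c := by
      simp only [hw, map_add, map_smul, LinearMap.add_apply, LinearMap.smul_apply,
        smul_eq_mul]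
      rw [hu, h11, h22, h02, h12]
      have e1 : g (S u) u = c := (hsym _ _)
      have e2 : g (S (S u)) u = 0 := by rw [hsym]; exact h02
      have e3 : g (S (S u)) (S u) = c := by rw [hsym]; exact h12
      rw [e1, e2, e3]; ring
    linarith [expand ▸ hpw]
  have hlt : c < Real.sqrt 2 / 2 := by
    have := key (-(Real.sqrt 2))
    nlinarith [sqrt2, sqrt2pos]
  have hgt : -(Real.sqrt 2 / 2) < c := by
    have := key (Real.sqrt 2)
    nlinarith [sqrt2, sqrt2pos]
  have habs : |c| < Real.sqrt 2 / 2 := abs_lt.2 ⟨hgt, hlt⟩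
  have h1le : Real.sqrt 2 / 2 ≤ 1 := by nlinarith
  have ha : Real.arccos (Real.sqrt 2 / 2) = Real.pi / 4 := by
    rw [← Real.cos_pi_div_four, Real.arccos_cos (by positivity) (by linarith [Real.pi_pos])]
  have hb : Real.arccos (-(Real.sqrt 2 / 2)) = 3 * Real.pi / 4 := by
    rw [Real.arccos_neg, ha]; ring
  have hmem1 : c ∈ Set.Icc (-1:ℝ) 1 := ⟨by linarith, by linarith⟩
  constructor
  · constructor
    · rw [hφ, ← ha]
      exact Real.strictAntiOn_arccos hmem1 ⟨by linarith, h1le⟩ hlt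
    · rw [hφ, ← hb]
      exact Real.strictAntiOn_arccos ⟨by linarith, by linarith⟩ hmem1 hgt
  · exact habs
end

section
/- Let u be a unit vector inducing an S-basis with cos φ = g(u,Su), φ ∈ (π/4, 3π/4), φ ≠ π/2. Then the vectors e₁ = u, e₂ = (−cos φ·u + Su − cos φ·S²u)/√(1−2cos²φ), e₃ = S²u are pairwise g-orthonormal. -/
/-! Since `S` is a `g`-isometry with `S⁴ = -1`, `g(v, S²v) = g(S²v, S⁴v) = -g(S²v, v)`, so `v ⊥ S²v`
for every `v`. Hence `u` and `S²u` are orthonormal, and both have inner product `c = g(u, Su)` with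
`Su`; the vector `-c u + Su - c S²u` is therefore the component of `Su` orthogonal to them, and its
squared length is `1 - 2c²`. -/

namespace BilinForm

variable {V : Type*} [AddCommGroup V] [Module ℝ V] {g : V →ₗ[ℝ] V →ₗ[ℝ] ℝ} {S : V →ₗ[ℝ] V}

theorem apply_apply_sq_self_eq_zero (hsym : ∀ u v : V, g u v = g v u)
    (hS4 : ∀ v : V, S (S (S (S v))) = -v) (hcomp : ∀ u v : V, g (S u) (S v) = g u v) (v : V) :
    g v (S (S v)) = 0 := by
  have h : g (S (S v)) (S (S (S (S v)))) = g v (S (S v)) := by rw [hcomp, hcomp]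
  rw [hS4, map_neg, hsym] at h
  linarith

variable (g S) in
def orthComponentS (u : V) : V :=
  (-g u (S u)) • u + S u + (-g u (S u)) • S (S u)

theorem apply_orthComponentS_eq_zero (hsym : ∀ u v : V, g u v = g v u)
    (hS4 : ∀ v : V, S (S (S (S v))) = -v) (hcomp : ∀ u v : V, g (S u) (S v) = g u v)
    {u : V} (hu : g u u = 1) : g u (orthComponentS g S u) = 0 := by
  simp only [orthComponentS, map_add, map_smul, smul_eq_mul, hu,
    apply_apply_sq_self_eq_zero hsym hS4 hcomp u]
  ring

theorem apply_sq_orthComponentS_eq_zero (hsym : ∀ u v : V, g u v = g v u)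
    (hS4 : ∀ v : V, S (S (S (S v))) = -v) (hcomp : ∀ u v : V, g (S u) (S v) = g u v)
    {u : V} (hu : g u u = 1) : g (S (S u)) (orthComponentS g S u) = 0 := by
  have h₀ : g (S (S u)) u = 0 := by rw [hsym]; exact apply_apply_sq_self_eq_zero hsym hS4 hcomp u
  have h₁ : g (S (S u)) (S u) = g u (S u) := by rw [hcomp, hsym]
  simp only [orthComponentS, map_add, map_smul, smul_eq_mul, h₀, h₁, hcomp, hu]
  ring

theorem apply_orthComponentS_orthComponentS (hsym : ∀ u v : V, g u v = g v u)
    (hS4 : ∀ v : V, S (S (S (S v))) = -v) (hcomp : ∀ u v : V, g (S u) (S v) = g u v)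
    {u : V} (hu : g u u = 1) :
    g (orthComponentS g S u) (orthComponentS g S u) = 1 - 2 * g u (S u) ^ 2 := by
  have h₀ : g (S (S u)) u = 0 := by rw [hsym]; exact apply_apply_sq_self_eq_zero hsym hS4 hcomp u
  have h₁ : g (S (S u)) (S u) = g u (S u) := by rw [hcomp, hsym]
  have h₂ : g (S u) u = g u (S u) := hsym _ _
  have h₃ : g (S u) (S (S u)) = g u (S u) := hcomp _ _
  simp only [orthComponentS, map_add, map_smul, LinearMap.add_apply, LinearMap.smul_apply,
    smul_eq_mul, h₀, h₁, h₂, h₃, hcomp, hu, apply_apply_sq_self_eq_zero hsym hS4 hcomp u]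
  ring

theorem apply_inv_sqrt_smul_self {w : V} (hw : 0 < g w w) :
    g ((√(g w w))⁻¹ • w) ((√(g w w))⁻¹ • w) = 1 := by
  simp only [map_smul, LinearMap.smul_apply, smul_eq_mul]
  rw [← mul_assoc, ← mul_inv, Real.mul_self_sqrt hw.le, inv_mul_cancel₀ hw.ne']

end BilinForm

open BilinForm in
theorem orthonormal_basis_alpha1_general {V : Type*} [AddCommGroup V] [Module ℝ V]
    (g : V →ₗ[ℝ] V →ₗ[ℝ] ℝ) (S : V →ₗ[ℝ] V)
    (hsym : ∀ u v : V, g u v = g v u)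
    (hS4 : ∀ v : V, S (S (S (S v))) = -v)
    (hcomp : ∀ u v : V, g (S u) (S v) = g u v)
    (u : V) (hu : g u u = 1)
    (c : ℝ) (hc : c = g u (S u)) (hc2 : 0 < 1 - 2 * c ^ 2)
    (e₁ e₂ e₃ : V)
    (he₁ : e₁ = u)
    (he₂ : e₂ = (Real.sqrt (1 - 2 * c ^ 2))⁻¹ • ((-c) • u + S u + (-c) • S (S u)))
    (he₃ : e₃ = S (S u)) :
    g e₁ e₁ = 1 ∧ g e₂ e₂ = 1 ∧ g e₃ e₃ = 1 ∧
    g e₁ e₂ = 0 ∧ g e₁ e₃ = 0 ∧ g e₂ e₃ = 0 := by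
  subst e₁ e₃ c
  have hw := apply_orthComponentS_orthComponentS hsym hS4 hcomp hu
  obtain rfl : e₂ = (√(g _ _))⁻¹ • orthComponentS g S u := by rw [he₂, hw]; rfl
  refine ⟨hu, apply_inv_sqrt_smul_self (hw ▸ hc2), by rw [hcomp, hcomp, hu], ?_,
    apply_apply_sq_self_eq_zero hsym hS4 hcomp u, ?_⟩
  · rw [map_smul, apply_orthComponentS_eq_zero hsym hS4 hcomp hu, smul_zero]
  · rw [hsym, map_smul, apply_sq_orthComponentS_eq_zero hsym hS4 hcomp hu, smul_zero]

theorem orthonormal_basis_alpha1 {V : Type*} [AddCommGroup V] [Module ℝ V]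
    (g : V →ₗ[ℝ] V →ₗ[ℝ] ℝ) (S : V →ₗ[ℝ] V)
    (hsym : ∀ u v : V, g u v = g v u)
    (hpos : ∀ v : V, v ≠ 0 → 0 < g v v)
    (hS4 : ∀ v : V, S (S (S (S v))) = -v)
    (hcomp : ∀ u v : V, g (S u) (S v) = g u v)
    (u : V) (hu : g u u = 1)
    (hind : LinearIndependent ℝ ![u, S u, S (S u), S (S (S u))])
    (c : ℝ) (hc : c = g u (S u)) (hc2 : 0 < 1 - 2 * c ^ 2)
    (e₁ e₂ e₃ : V)
    (he₁ : e₁ = u)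
    (he₂ : e₂ = (Real.sqrt (1 - 2 * c ^ 2))⁻¹ • ((-c) • u + S u + (-c) • S (S u)))
    (he₃ : e₃ = S (S u)) :
    g e₁ e₁ = 1 ∧ g e₂ e₂ = 1 ∧ g e₃ e₃ = 1 ∧
    g e₁ e₂ = 0 ∧ g e₁ e₃ = 0 ∧ g e₂ e₃ = 0 :=
  orthonormal_basis_alpha1_general g S hsym hS4 hcomp u hu c hc hc2 e₁ e₂ e₃ he₁ he₂ he₃
end

section
/- With e₁ = u, e₂ = (−cos φ·u + Su − cos φ·S²u)/√(1−2cos²φ), e₃ = S²u as above, the associated form satisfies g̃(e₁,e₁) = g̃(e₃,e₃) = 2cos φ, g̃(e₂,e₂) = −2cos φ, g̃(e₁,e₂) = g̃(e₂,e₃) = √(1−2cos²φ), g̃(e₁,e₃) = 0. Hence for v = x e₁ + y e₂ + z e₃: g̃(v,v) = 2cos φ(x²−y²+z²) + 2√(1−2cos²φ)(xy+yz). -/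
/-!
On the frame `u, S u, S² u` the form `g̃` has the Gram matrix
`[[2c, 1, 0], [1, 2c, 1], [0, 1, 2c]]`: `S` is a `g`-isometry with `S⁴ = -1`, so `g(v, S² v) = 0`
and `g(v, S³ v) = -g(v, S v)`. Writing `x e₁ + y e₂ + z e₃` in that frame turns every claim into a
polynomial identity in `c` and `r = √(1 - 2c²)`, using only `r² = 1 - 2c²`.
-/

section AssocForm

variable {V : Type*} [AddCommGroup V] [Module ℝ V] (g : V →ₗ[ℝ] V →ₗ[ℝ] ℝ) (S : V →ₗ[ℝ] V)

def assocForm : V →ₗ[ℝ] V →ₗ[ℝ] ℝ := g.compl₂ S + g ∘ₗ S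

variable {g S}

@[simp]
theorem assocForm_apply (u v : V) : assocForm g S u v = g u (S v) + g (S u) v := rfl

theorem assocForm_comm (hsym : ∀ u v : V, g u v = g v u) (u v : V) :
    assocForm g S u v = assocForm g S v u := by
  rw [assocForm_apply, assocForm_apply, hsym u, hsym (S u)]
  ring

theorem assocForm_map_map (hcomp : ∀ u v : V, g (S u) (S v) = g u v) (u v : V) :
    assocForm g S (S u) (S v) = assocForm g S u v := by
  simp only [assocForm_apply, hcomp]

theorem assocForm_self (hsym : ∀ u v : V, g u v = g v u) (v : V) :
    assocForm g S v v = 2 * g v (S v) := by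
  rw [assocForm_apply, hsym (S v)]
  ring

theorem apply_self_map_map_eq_zero (hsym : ∀ u v : V, g u v = g v u)
    (hS4 : ∀ v : V, S (S (S (S v))) = -v) (hcomp : ∀ u v : V, g (S u) (S v) = g u v) (v : V) :
    g v (S (S v)) = 0 := by
  have h : g (S (S v)) (S (S (S (S v)))) = g v (S (S v)) := by rw [hcomp, hcomp]
  rw [hS4, map_neg, hsym] at h
  linarith

theorem assocForm_map_right (hsym : ∀ u v : V, g u v = g v u)
    (hS4 : ∀ v : V, S (S (S (S v))) = -v) (hcomp : ∀ u v : V, g (S u) (S v) = g u v) (v : V) :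
    assocForm g S v (S v) = g v v := by
  rw [assocForm_apply, apply_self_map_map_eq_zero hsym hS4 hcomp, hcomp, zero_add]

theorem assocForm_map_map_right (hsym : ∀ u v : V, g u v = g v u)
    (hS4 : ∀ v : V, S (S (S (S v))) = -v) (hcomp : ∀ u v : V, g (S u) (S v) = g u v) (v : V) :
    assocForm g S v (S (S v)) = 0 := by
  have h : g (S v) (S (S (S (S v)))) = g v (S (S (S v))) := hcomp _ _
  rw [hS4, map_neg, hsym] at h
  rw [assocForm_apply, hcomp]
  linarith

theorem assocForm_frame (hsym : ∀ u v : V, g u v = g v u)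
    (hS4 : ∀ v : V, S (S (S (S v))) = -v) (hcomp : ∀ u v : V, g (S u) (S v) = g u v)
    (u : V) (a b d a' b' d' : ℝ) :
    assocForm g S (a • u + b • S u + d • S (S u)) (a' • u + b' • S u + d' • S (S u)) =
      2 * g u (S u) * (a * a' + b * b' + d * d') + g u u * (a * b' + b * a' + b * d' + d * b') := by
  have h₀₀ := assocForm_self (S := S) hsym u
  have h₀₁ := assocForm_map_right hsym hS4 hcomp u
  have h₀₂ := assocForm_map_map_right hsym hS4 hcomp u
  have h₁₁ : assocForm g S (S u) (S u) = assocForm g S u u := assocForm_map_map hcomp u u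
  have h₁₂ : assocForm g S (S u) (S (S u)) = assocForm g S u (S u) := assocForm_map_map hcomp _ _
  have h₂₂ : assocForm g S (S (S u)) (S (S u)) = assocForm g S u u := by
    rw [assocForm_map_map hcomp, assocForm_map_map hcomp]
  simp only [map_add, map_smul, LinearMap.add_apply, LinearMap.smul_apply, smul_eq_mul]
  rw [assocForm_comm hsym (S u) u, assocForm_comm hsym (S (S u)) u,
    assocForm_comm hsym (S (S u)) (S u), h₂₂, h₁₂, h₁₁, h₀₀, h₀₁, h₀₂]
  ring

end AssocForm

theorem sphere_equation_alpha1_general {V : Type*} [AddCommGroup V] [Module ℝ V]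
    (g : V →ₗ[ℝ] V →ₗ[ℝ] ℝ) (S : V →ₗ[ℝ] V)
    (hsym : ∀ u v : V, g u v = g v u)
    (hS4 : ∀ v : V, S (S (S (S v))) = -v)
    (hcomp : ∀ u v : V, g (S u) (S v) = g u v)
    (gt : V → V → ℝ) (hgt : ∀ u v : V, gt u v = g u (S v) + g (S u) v)
    (u : V) (hu : g u u = 1)
    (c : ℝ) (hc : c = g u (S u)) (hc2 : 0 < 1 - 2 * c ^ 2)
    (e₁ e₂ e₃ : V)
    (he₁ : e₁ = u)
    (he₂ : e₂ = (Real.sqrt (1 - 2 * c ^ 2))⁻¹ • ((-c) • u + S u + (-c) • S (S u)))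
    (he₃ : e₃ = S (S u)) :
    (gt e₁ e₁ = 2 * c ∧ gt e₃ e₃ = 2 * c ∧ gt e₂ e₂ = -(2 * c) ∧
     gt e₁ e₂ = Real.sqrt (1 - 2 * c ^ 2) ∧ gt e₂ e₃ = Real.sqrt (1 - 2 * c ^ 2) ∧
     gt e₁ e₃ = 0) ∧
    ∀ x y z : ℝ, ∀ v : V, v = x • e₁ + y • e₂ + z • e₃ →
      gt v v = 2 * c * (x ^ 2 - y ^ 2 + z ^ 2)
        + 2 * Real.sqrt (1 - 2 * c ^ 2) * (x * y + y * z) := by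
  set r := Real.sqrt (1 - 2 * c ^ 2)
  have hr : r ^ 2 = 1 - 2 * c ^ 2 := Real.sq_sqrt hc2.le
  have hr₀ : r ≠ 0 := (Real.sqrt_pos.2 hc2).ne'
  have hframe (x y z : ℝ) : x • e₁ + y • e₂ + z • e₃ =
      (x - c * y / r) • u + (y / r) • S u + (z - c * y / r) • S (S u) := by
    rw [he₁, he₂, he₃]
    module
  have hbil (x y z x' y' z' : ℝ) : gt (x • e₁ + y • e₂ + z • e₃) (x' • e₁ + y' • e₂ + z' • e₃) =
      2 * c * (x * x' - y * y' + z * z') + r * (x * y' + y * x' + y * z' + z * y') := by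
    rw [hgt, ← assocForm_apply, hframe, hframe, assocForm_frame hsym hS4 hcomp, ← hc, hu]
    field_simp
    linear_combination (2 * c * y * y' - r * (x * y' + y * x' + y * z' + z * y')) * hr
  refine ⟨⟨?_, ?_, ?_, ?_, ?_, ?_⟩, fun x y z v hv => ?_⟩
  · simpa using hbil 1 0 0 1 0 0
  · simpa using hbil 0 0 1 0 0 1
  · simpa using hbil 0 1 0 0 1 0
  · simpa using hbil 1 0 0 0 1 0
  · simpa using hbil 0 1 0 0 0 1
  · simpa using hbil 1 0 0 0 0 1
  · rw [hv, hbil]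
    ring

theorem sphere_equation_alpha1 {V : Type*} [AddCommGroup V] [Module ℝ V]
    (g : V →ₗ[ℝ] V →ₗ[ℝ] ℝ) (S : V →ₗ[ℝ] V)
    (hsym : ∀ u v : V, g u v = g v u)
    (hpos : ∀ v : V, v ≠ 0 → 0 < g v v)
    (hS4 : ∀ v : V, S (S (S (S v))) = -v)
    (hcomp : ∀ u v : V, g (S u) (S v) = g u v)
    (gt : V → V → ℝ) (hgt : ∀ u v : V, gt u v = g u (S v) + g (S u) v)
    (u : V) (hu : g u u = 1)
    (c : ℝ) (hc : c = g u (S u)) (hc2 : 0 < 1 - 2 * c ^ 2)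
    (e₁ e₂ e₃ : V)
    (he₁ : e₁ = u)
    (he₂ : e₂ = (Real.sqrt (1 - 2 * c ^ 2))⁻¹ • ((-c) • u + S u + (-c) • S (S u)))
    (he₃ : e₃ = S (S u)) :
    (gt e₁ e₁ = 2 * c ∧ gt e₃ e₃ = 2 * c ∧ gt e₂ e₂ = -(2 * c) ∧
     gt e₁ e₂ = Real.sqrt (1 - 2 * c ^ 2) ∧ gt e₂ e₃ = Real.sqrt (1 - 2 * c ^ 2) ∧
     gt e₁ e₃ = 0) ∧
    ∀ x y z : ℝ, ∀ v : V, v = x • e₁ + y • e₂ + z • e₃ →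
      gt v v = 2 * c * (x ^ 2 - y ^ 2 + z ^ 2)
        + 2 * Real.sqrt (1 - 2 * c ^ 2) * (x * y + y * z) :=
  sphere_equation_alpha1_general g S hsym hS4 hcomp gt hgt u hu c hc hc2 e₁ e₂ e₃ he₁ he₂ he₃
end

section
/- Let u be a unit vector inducing an S-basis with cos φ = g(u,Su), 1−2cos²φ > 0. Then e₁ = Su, e₂ = (u − cos φ·Su + cos φ·S³u)/√(1−2cos²φ), e₃ = S³u are pairwise g-orthonormal, and g̃(e₁,e₁)=g̃(e₃,e₃)=2cos φ, g̃(e₂,e₂)=−2cos φ, g̃(e₁,e₂)=√(1−2cos²φ), g̃(e₂,e₃)=−√(1−2cos²φ), g̃(e₁,e₃)=0. -/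
/-!
Since `S` is a `g`-isometry with `S⁴ = -1`, its `g`-adjoint is `S⁻¹ = -S³`. Together with the
symmetry of `g` this gives `g(v, S²v) = 0` and `g(v, S³v) = -g(v, Sv)` for every `v`, so all inner
products among `u, Su, S²u, S³u` are `0`, `±1` or `±cos φ`; the claimed values then follow by
bilinear expansion and `√(1 - 2cos²φ)² = 1 - 2cos²φ`.
-/

section
variable {V : Type*} [AddCommGroup V] [Module ℝ V] {g : V →ₗ[ℝ] V →ₗ[ℝ] ℝ} {S : V →ₗ[ℝ] V}

theorem g_S_eq_neg_g_S_cube (hS4 : ∀ v : V, S (S (S (S v))) = -v)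
    (hcomp : ∀ u v : V, g (S u) (S v) = g u v) (a b : V) :
    g (S a) b = -g a (S (S (S b))) := by
  rw [← hcomp a (S (S (S b))), hS4, map_neg, neg_neg]

variable (hsym : ∀ u v : V, g u v = g v u) (hS4 : ∀ v : V, S (S (S (S v))) = -v)
    (hcomp : ∀ u v : V, g (S u) (S v) = g u v)
include hsym hS4 hcomp

theorem g_self_S_sq_eq_zero (v : V) : g v (S (S v)) = 0 := by
  have h := g_S_eq_neg_g_S_cube hS4 hcomp (S v) v
  rw [hcomp, hsym] at h
  linarith

theorem g_self_S_cube_eq_neg (v : V) : g v (S (S (S v))) = -g v (S v) := by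
  rw [← neg_eq_iff_eq_neg, ← g_S_eq_neg_g_S_cube hS4 hcomp, hsym]

end

theorem sphere_equation_alpha2_general {V : Type*} [AddCommGroup V] [Module ℝ V]
    (g : V →ₗ[ℝ] V →ₗ[ℝ] ℝ) (S : V →ₗ[ℝ] V)
    (hsym : ∀ u v : V, g u v = g v u)
    (hS4 : ∀ v : V, S (S (S (S v))) = -v)
    (hcomp : ∀ u v : V, g (S u) (S v) = g u v)
    (gt : V → V → ℝ) (hgt : ∀ u v : V, gt u v = g u (S v) + g (S u) v)
    (u : V) (hu : g u u = 1)
    (c : ℝ) (hc : c = g u (S u)) (hc2 : 0 < 1 - 2 * c ^ 2)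
    (e₁ e₂ e₃ : V)
    (he₁ : e₁ = S u)
    (he₂ : e₂ = (Real.sqrt (1 - 2 * c ^ 2))⁻¹ • (u + (-c) • S u + c • S (S (S u))))
    (he₃ : e₃ = S (S (S u))) :
    (g e₁ e₁ = 1 ∧ g e₂ e₂ = 1 ∧ g e₃ e₃ = 1 ∧
     g e₁ e₂ = 0 ∧ g e₁ e₃ = 0 ∧ g e₂ e₃ = 0) ∧
    (gt e₁ e₁ = 2 * c ∧ gt e₃ e₃ = 2 * c ∧ gt e₂ e₂ = -(2 * c) ∧
     gt e₁ e₂ = Real.sqrt (1 - 2 * c ^ 2) ∧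
     gt e₂ e₃ = -Real.sqrt (1 - 2 * c ^ 2) ∧ gt e₁ e₃ = 0) := by
  subst he₁ he₂ he₃
  set r := Real.sqrt (1 - 2 * c ^ 2)
  have hr2 : r ^ 2 = 1 - 2 * c ^ 2 := Real.sq_sqrt hc2.le
  have hr : r ≠ 0 := (Real.sqrt_pos.2 hc2).ne'
  simp only [hgt, map_add, map_smul, map_neg, LinearMap.add_apply, LinearMap.smul_apply,
    LinearMap.neg_apply, smul_eq_mul, g_S_eq_neg_g_S_cube hS4 hcomp, hS4, neg_neg,
    g_self_S_sq_eq_zero hsym hS4 hcomp, g_self_S_cube_eq_neg hsym hS4 hcomp, hu, ← hc]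
  refine ⟨⟨trivial, ?_, trivial, ?_, trivial, ?_⟩, ?_, ?_, ?_, ?_, ?_, ?_⟩
  all_goals field_simp
  all_goals
    try rw [hr2]
    ring

theorem sphere_equation_alpha2 {V : Type*} [AddCommGroup V] [Module ℝ V]
    (g : V →ₗ[ℝ] V →ₗ[ℝ] ℝ) (S : V →ₗ[ℝ] V)
    (hsym : ∀ u v : V, g u v = g v u)
    (hpos : ∀ v : V, v ≠ 0 → 0 < g v v)
    (hS4 : ∀ v : V, S (S (S (S v))) = -v)
    (hcomp : ∀ u v : V, g (S u) (S v) = g u v)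
    (gt : V → V → ℝ) (hgt : ∀ u v : V, gt u v = g u (S v) + g (S u) v)
    (u : V) (hu : g u u = 1)
    (hind : LinearIndependent ℝ ![u, S u, S (S u), S (S (S u))])
    (c : ℝ) (hc : c = g u (S u)) (hc2 : 0 < 1 - 2 * c ^ 2)
    (e₁ e₂ e₃ : V)
    (he₁ : e₁ = S u)
    (he₂ : e₂ = (Real.sqrt (1 - 2 * c ^ 2))⁻¹ • (u + (-c) • S u + c • S (S (S u))))
    (he₃ : e₃ = S (S (S u))) :
    (g e₁ e₁ = 1 ∧ g e₂ e₂ = 1 ∧ g e₃ e₃ = 1 ∧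
     g e₁ e₂ = 0 ∧ g e₁ e₃ = 0 ∧ g e₂ e₃ = 0) ∧
    (gt e₁ e₁ = 2 * c ∧ gt e₃ e₃ = 2 * c ∧ gt e₂ e₂ = -(2 * c) ∧
     gt e₁ e₂ = Real.sqrt (1 - 2 * c ^ 2) ∧
     gt e₂ e₃ = -Real.sqrt (1 - 2 * c ^ 2) ∧ gt e₁ e₃ = 0) :=
  sphere_equation_alpha2_general g S hsym hS4 hcomp gt hgt u hu c hc hc2 e₁ e₂ e₃ he₁ he₂ he₃
end

section
/- Let u be a unit vector with cos φ = g(u,Su), |cos φ| < 1. Then e₁ = (u+Su)/√(2(1+cos φ)) and e₂ = (−u+Su)/√(2(1−cos φ)) are g-orthonormal, and g̃(e₁,e₁) = (2cos φ+1)/(1+cos φ), g̃(e₂,e₂) = (2cos φ−1)/(1−cos φ), g̃(e₁,e₂) = 0. -/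
theorem circle_basis_beta2 {V : Type*} [AddCommGroup V] [Module ℝ V]
    (g : V →ₗ[ℝ] V →ₗ[ℝ] ℝ) (S : V →ₗ[ℝ] V)
    (hsym : ∀ u v : V, g u v = g v u)
    (hpos : ∀ v : V, v ≠ 0 → 0 < g v v)
    (hS4 : ∀ v : V, S (S (S (S v))) = -v)
    (hcomp : ∀ u v : V, g (S u) (S v) = g u v)
    (gt : V → V → ℝ) (hgt : ∀ u v : V, gt u v = g u (S v) + g (S u) v)
    (u : V) (hu : g u u = 1)
    (c : ℝ) (hc : c = g u (S u)) (hc1 : -1 < c) (hc2 : c < 1)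
    (e₁ e₂ : V)
    (he₁ : e₁ = (Real.sqrt (2 * (1 + c)))⁻¹ • (u + S u))
    (he₂ : e₂ = (Real.sqrt (2 * (1 - c)))⁻¹ • (-u + S u)) :
    (g e₁ e₁ = 1 ∧ g e₂ e₂ = 1 ∧ g e₁ e₂ = 0) ∧
    gt e₁ e₁ = (2 * c + 1) / (1 + c) ∧
    gt e₂ e₂ = (2 * c - 1) / (1 - c) ∧
    gt e₁ e₂ = 0 := by
  set A := Real.sqrt (2 * (1 + c)) with hAdef
  set B := Real.sqrt (2 * (1 - c)) with hBdef
  have hApos : (0:ℝ) < 2 * (1 + c) := by linarith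
  have hBpos : (0:ℝ) < 2 * (1 - c) := by linarith
  have hA2 : A * A = 2 * (1 + c) := Real.mul_self_sqrt hApos.le
  have hB2 : B * B = 2 * (1 - c) := Real.mul_self_sqrt hBpos.le
  have hA0 : A ≠ 0 := by positivity
  have hB0 : B ≠ 0 := by positivity
  have h1 : g (S u) (S u) = 1 := by rw [hcomp]; exact hu
  have h2 : g u (S (S u)) = 0 := by
    have e1 : g (S (S u)) (S (S (S (S u)))) = g u (S (S u)) := by
      rw [hcomp, hcomp]
    rw [hS4, map_neg, hsym] at e1
    linarith
  have h3 : g u (S (S (S u))) = -c := by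
    have e1 : g (S u) (S (S (S (S u)))) = g u (S (S (S u))) := by rw [hcomp]
    rw [hS4, map_neg, hsym, ← hc] at e1
    linarith
  have h4 : g (S u) (S (S u)) = c := by rw [hcomp, ← hc]
  have h5 : g (S u) u = c := by rw [hsym, ← hc]
  have h6 : g (S (S u)) u = 0 := by rw [hsym]; exact h2
  have h7 : g (S (S u)) (S u) = c := by rw [hsym]; exact h4
  simp only [he₁, he₂, hgt, map_add, map_neg, map_smul, LinearMap.add_apply,
    LinearMap.neg_apply, LinearMap.smul_apply, smul_eq_mul, map_smul,
    smul_eq_mul, h1, h2, h3, h4, h5, h6, h7, hu, ← hc]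
  have hAinv : A⁻¹ * A⁻¹ * (2 * (1 + c)) = 1 := by
    rw [← hA2]; field_simp
  have hBinv : B⁻¹ * B⁻¹ * (2 * (1 - c)) = 1 := by
    rw [← hB2]; field_simp
  constructor
  · refine ⟨?_, ?_, ?_⟩
    · linear_combination hAinv
    · linear_combination hBinv
    · ring
  · refine ⟨?_, ?_, ?_⟩
    · rw [eq_div_iff (by linarith : (1:ℝ) + c ≠ 0)]
      linear_combination (2 * c + 1) * hAinv
    · rw [eq_div_iff (by linarith : (1:ℝ) - c ≠ 0)]
      linear_combination (2 * c - 1) * hBinv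
    · ring
end

section
/- Let u be a unit vector with cos φ = g(u,Su), |cos φ| < 1. Then e₁ = (u+S³u)/√(2(1−cos φ)) and e₂ = (−u+S³u)/√(2(1+cos φ)) are g-orthonormal, and g̃(e₁,e₁) = (2cos φ−1)/(1−cos φ), g̃(e₂,e₂) = (2cos φ+1)/(1+cos φ), g̃(e₁,e₂) = 0. -/
/-! Since `S` is a `g`-isometry with `S⁴ = -1`, the Gram matrix of `u, Su, S²u, S³u` is determined
by `c = g(u, Su)`: `g(u, S²u) = 0` because `g(S²u, S⁴u) = -g(u, S²u)`, and `g(u, S³u) = -c`. Hence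
`u + S³u` and `-u + S³u` are orthogonal with squared lengths `2(1 - c)` and `2(1 + c)`, and since
`S(u + S³u) = Su - u` and `S(-u + S³u) = -Su - u`, the values of `g̃` on them are read off the
same Gram matrix. -/

section

variable {V : Type*} [AddCommGroup V] [Module ℝ V]

structure IsEighthTurnIsometry (g : V →ₗ[ℝ] V →ₗ[ℝ] ℝ) (S : V →ₗ[ℝ] V) : Prop where
  symm : ∀ u v : V, g u v = g v u
  pow_four : ∀ v : V, S (S (S (S v))) = -v
  isometry : ∀ u v : V, g (S u) (S v) = g u v

def twistForm (g : V →ₗ[ℝ] V →ₗ[ℝ] ℝ) (S : V →ₗ[ℝ] V) : V →ₗ[ℝ] V →ₗ[ℝ] ℝ :=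
  g.compl₂ S + g ∘ₗ S

@[simp]
lemma twistForm_apply (g : V →ₗ[ℝ] V →ₗ[ℝ] ℝ) (S : V →ₗ[ℝ] V) (u v : V) :
    twistForm g S u v = g u (S v) + g (S u) v :=
  rfl

namespace IsEighthTurnIsometry

variable {g : V →ₗ[ℝ] V →ₗ[ℝ] ℝ} {S : V →ₗ[ℝ] V} (hS : IsEighthTurnIsometry g S) (v : V)
include hS

lemma self_apply_sq_eq_zero : g v (S (S v)) = 0 := by
  have h : g v (S (S v)) = -g v (S (S v)) := calc
    g v (S (S v)) = g (S (S v)) (S (S (S (S v)))) := by rw [hS.isometry, hS.isometry]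
    _ = -g v (S (S v)) := by rw [hS.pow_four, map_neg, hS.symm]
  linarith

lemma self_apply_cube : g v (S (S (S v))) = -g v (S v) := by
  rw [← hS.isometry, hS.pow_four, map_neg, hS.symm]

lemma apply_cube_self : g (S (S (S v))) v = -g v (S v) := by
  rw [hS.symm, hS.self_apply_cube]

lemma apply_cube_apply_eq_zero : g (S (S (S v))) (S v) = 0 := by
  rw [hS.isometry, hS.symm, hS.self_apply_sq_eq_zero]

lemma apply_apply_cube_eq_zero : g (S v) (S (S (S v))) = 0 := by
  rw [hS.symm, hS.apply_cube_apply_eq_zero]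

lemma apply_cube_apply_cube : g (S (S (S v))) (S (S (S v))) = g v v := by
  rw [hS.isometry, hS.isometry, hS.isometry]

lemma gram_add_cube : g (v + S (S (S v))) (v + S (S (S v))) = 2 * (g v v - g v (S v)) := by
  simp only [map_add, LinearMap.add_apply, hS.self_apply_cube,
    hS.apply_cube_self, hS.apply_cube_apply_cube]
  ring

lemma gram_neg_add_cube :
    g (-v + S (S (S v))) (-v + S (S (S v))) = 2 * (g v v + g v (S v)) := by
  simp only [map_add, map_neg, LinearMap.add_apply, LinearMap.neg_apply,
    hS.self_apply_cube, hS.apply_cube_self, hS.apply_cube_apply_cube]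
  ring

lemma gram_add_cube_neg_add_cube : g (v + S (S (S v))) (-v + S (S (S v))) = 0 := by
  simp only [map_add, map_neg, LinearMap.add_apply,
    hS.self_apply_cube, hS.apply_cube_self, hS.apply_cube_apply_cube]
  ring

lemma twist_add_cube :
    twistForm g S (v + S (S (S v))) (v + S (S (S v))) = 2 * (2 * g v (S v) - g v v) := by
  simp only [twistForm_apply, map_add, map_neg, LinearMap.add_apply, LinearMap.neg_apply,
    hS.pow_four, hS.self_apply_cube, hS.apply_cube_self, hS.apply_cube_apply_eq_zero,
    hS.apply_apply_cube_eq_zero, hS.symm (S v) v]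
  ring

lemma twist_neg_add_cube :
    twistForm g S (-v + S (S (S v))) (-v + S (S (S v))) = 2 * (2 * g v (S v) + g v v) := by
  simp only [twistForm_apply, map_add, map_neg, LinearMap.add_apply, LinearMap.neg_apply,
    hS.pow_four, hS.self_apply_cube, hS.apply_cube_self, hS.apply_cube_apply_eq_zero,
    hS.apply_apply_cube_eq_zero, hS.symm (S v) v]
  ring

lemma twist_add_cube_neg_add_cube :
    twistForm g S (v + S (S (S v))) (-v + S (S (S v))) = 0 := by
  simp only [twistForm_apply, map_add, map_neg, LinearMap.add_apply, LinearMap.neg_apply,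
    hS.pow_four, hS.self_apply_cube, hS.apply_cube_self, hS.apply_cube_apply_eq_zero,
    hS.apply_apply_cube_eq_zero, hS.symm (S v) v]
  ring

end IsEighthTurnIsometry

end

lemma inv_sqrt_mul_inv_sqrt_mul {x : ℝ} (hx : 0 ≤ x) (y : ℝ) :
    (√x)⁻¹ * ((√x)⁻¹ * y) = y / x := by
  rw [← mul_assoc, ← mul_inv, Real.mul_self_sqrt hx, inv_mul_eq_div]

theorem circle_basis_beta3_general {V : Type*} [AddCommGroup V] [Module ℝ V]
    (g : V →ₗ[ℝ] V →ₗ[ℝ] ℝ) (S : V →ₗ[ℝ] V)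
    (hsym : ∀ u v : V, g u v = g v u)
    (hS4 : ∀ v : V, S (S (S (S v))) = -v)
    (hcomp : ∀ u v : V, g (S u) (S v) = g u v)
    (gt : V → V → ℝ) (hgt : ∀ u v : V, gt u v = g u (S v) + g (S u) v)
    (u : V) (hu : g u u = 1)
    (c : ℝ) (hc : c = g u (S u)) (hc1 : -1 < c) (hc2 : c < 1)
    (e₁ e₂ : V)
    (he₁ : e₁ = (Real.sqrt (2 * (1 - c)))⁻¹ • (u + S (S (S u))))
    (he₂ : e₂ = (Real.sqrt (2 * (1 + c)))⁻¹ • (-u + S (S (S u)))) :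
    (g e₁ e₁ = 1 ∧ g e₂ e₂ = 1 ∧ g e₁ e₂ = 0) ∧
    gt e₁ e₁ = (2 * c - 1) / (1 - c) ∧
    gt e₂ e₂ = (2 * c + 1) / (1 + c) ∧
    gt e₁ e₂ = 0 := by
  have hS : IsEighthTurnIsometry g S := ⟨hsym, hS4, hcomp⟩
  have h₁ : 0 < 2 * (1 - c) := by linarith
  have h₂ : 0 < 2 * (1 + c) := by linarith
  obtain rfl : gt = fun u v => twistForm g S u v := funext₂ hgt
  subst he₁ he₂
  simp only [map_smul, LinearMap.smul_apply, smul_eq_mul, hS.gram_add_cube, hS.gram_neg_add_cube,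
    hS.gram_add_cube_neg_add_cube, hS.twist_add_cube, hS.twist_neg_add_cube,
    hS.twist_add_cube_neg_add_cube, hu, ← hc, inv_sqrt_mul_inv_sqrt_mul h₁.le,
    inv_sqrt_mul_inv_sqrt_mul h₂.le]
  exact ⟨⟨div_self h₁.ne', div_self h₂.ne', by ring⟩, mul_div_mul_left _ _ two_ne_zero,
    mul_div_mul_left _ _ two_ne_zero, by ring⟩

theorem circle_basis_beta3 {V : Type*} [AddCommGroup V] [Module ℝ V]
    (g : V →ₗ[ℝ] V →ₗ[ℝ] ℝ) (S : V →ₗ[ℝ] V)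
    (hsym : ∀ u v : V, g u v = g v u)
    (hpos : ∀ v : V, v ≠ 0 → 0 < g v v)
    (hS4 : ∀ v : V, S (S (S (S v))) = -v)
    (hcomp : ∀ u v : V, g (S u) (S v) = g u v)
    (gt : V → V → ℝ) (hgt : ∀ u v : V, gt u v = g u (S v) + g (S u) v)
    (u : V) (hu : g u u = 1)
    (c : ℝ) (hc : c = g u (S u)) (hc1 : -1 < c) (hc2 : c < 1)
    (e₁ e₂ : V)
    (he₁ : e₁ = (Real.sqrt (2 * (1 - c)))⁻¹ • (u + S (S (S u))))
    (he₂ : e₂ = (Real.sqrt (2 * (1 + c)))⁻¹ • (-u + S (S (S u)))) :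
    (g e₁ e₁ = 1 ∧ g e₂ e₂ = 1 ∧ g e₁ e₂ = 0) ∧
    gt e₁ e₁ = (2 * c - 1) / (1 - c) ∧
    gt e₂ e₂ = (2 * c + 1) / (1 + c) ∧
    gt e₁ e₂ = 0 :=
  circle_basis_beta3_general g S hsym hS4 hcomp gt hgt u hu c hc hc1 hc2 e₁ e₂ he₁ he₂
end
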